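/- Möbius function and disconnecting chains: Let P be a finite poset, c a chain of the Hasse diagram of P with vertex set V_c, and P_1, ..., P_n the regions associated to c (induced subposets on G_i ∪ V_c where G_i are the connected components of the Hasse diagram minus V_c). For distinct i, j ∈ P: if j covers i then μ_P(i,j) = −1; otherwise μ_P(i,j) = Σ_{k=1}^n μ_{P_k}(i,j), with the convention that μ_Q(i,j)=0 if i∉Q or j∉Q. -/

import Mathlib

open scoped BigOperators

/-- The field of rational functions in variables indexed by `V` over `ℚ`. -/
abbrev K (V : Type) : Type := FractionRing (MvPolynomial V ℚ)

/-- The variable `x_v` seen inside the field of rational functions. -/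
noncomputable def xv {V : Type} (v : V) : K V :=
  algebraMap (MvPolynomial V ℚ) (K V) (MvPolynomial.X v)

/-- `ψ_w = 1 / ∏ (x_{w_i} - x_{w_{i+1}})` for a word `w`. -/
noncomputable def psi {V : Type} (w : List V) : K V :=
  (((w.zip w.tail).map fun p => xv p.1 - xv p.2).prod)⁻¹

/-- The word (list of vertices) associated to an enumeration `σ` of the vertex set `W`. -/
def wordOf {V : Type} (W : Finset V) (σ : Fin W.card ≃ W) : List V :=
  (List.finRange W.card).map fun i => ((σ i : W) : V)

/-- `σ` enumerates `W` in an order compatible with all edges of `E`: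
the origin of every edge appears before its end. -/
def IsExt {V : Type} (W : Finset V) (E : Finset (V × V)) (σ : Fin W.card ≃ W) : Prop :=
  ∀ e ∈ E, ∃ i j : Fin W.card, i < j ∧ ((σ i : W) : V) = e.1 ∧ ((σ j : W) : V) = e.2

instance {V : Type} [DecidableEq V] (W : Finset V) (E : Finset (V × V)) (σ : Fin W.card ≃ W) :
    Decidable (IsExt W E σ) := by unfold IsExt; exact inferInstance

/-- `Ψ(G) = Σ_{w ∈ L(G)} ψ_w`, the sum over linear extensions of the graph with
vertex set `W` and edge set `E`. -/
noncomputable def PsiG {V : Type} [DecidableEq V] (W : Finset V) (E : Finset (V × V)) : K V :=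
  ∑ σ : Fin W.card ≃ W, if IsExt W E σ then psi (wordOf W σ) else 0

/-- `N(G) = Ψ(G) ⬝ ∏_{(a,b) ∈ E} (x_a - x_b)`. -/
noncomputable def NG {V : Type} [DecidableEq V] (W : Finset V) (E : Finset (V × V)) : K V :=
  PsiG W E * ∏ e ∈ E, (xv e.1 - xv e.2)

/-- `φ(G)`, the formal sum of the linear extensions of `G` in the free abelian
group on words. -/
noncomputable def phiG {V : Type} [DecidableEq V] (W : Finset V) (E : Finset (V × V)) :
    List V →₀ ℤ :=
  ∑ σ : Fin W.card ≃ W, if IsExt W E σ then Finsupp.single (wordOf W σ) 1 else 0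

/-- The graph has no directed circuit. -/
def Acyclic {V : Type} (E : Finset (V × V)) : Prop :=
  ∀ v : V, ¬ Relation.TransGen (fun a b => (a, b) ∈ E) v v

/-- The underlying undirected simple graph of the directed graph with edge set `E`. -/
def undirected {V : Type} (E : Finset (V × V)) : SimpleGraph V :=
  SimpleGraph.fromRel fun a b => (a, b) ∈ E

/-- The cyclically-consecutive pairs of a list of vertices. -/
def cyclePairs {V : Type} [DecidableEq V] (vs : List V) : Finset (V × V) :=
  Finset.image (fun i : Fin vs.length => (vs.get i, vs.get (finRotate _ i))) Finset.univ

/-- `vs` is (the vertex list of) a cycle of the graph `E`, whose set of forward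
edges (edges traversed in their graph orientation) is `HE`. -/
def IsCycle {V : Type} [DecidableEq V] (E : Finset (V × V)) (vs : List V)
    (HE : Finset (V × V)) : Prop :=
  2 ≤ vs.length ∧ vs.Nodup ∧ HE ⊆ cyclePairs vs ∧ HE ⊆ E ∧
    ∀ p ∈ cyclePairs vs, p ∉ HE → (p.2, p.1) ∈ E

open Finset IncidenceAlgebra

/-!
For fixed `a`, the row `μ_P(a, ·)` is the only function whose sums over the intervals `[a, b]`
are `δ(a, b)`. Write `C` for the chain and `R_k = S_k ∪ C` for the regions. Since a covering
edge leaving `S_k` ends in `R_k`, every element of `R_k ∩ [a, b]` with `b ∉ R_k` lies below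
the greatest chain element `d` of `[a, b]`; hence `∑_{x ∈ [a, b]} μ_{R_k}(a, x) = [a = d]`.

If `a ∉ C`, then `d ≠ a`, so for the component `S_k ∋ a` the row `μ_{R_k}(a, ·)` has the
defining interval sums and equals `μ_P(a, ·)`; no other region contains `a`. If `a ∈ C`, the
sum over the `n` regions of these rows overshoots by `n - 1` at `b = a`, and this is compensated
by `n - 1` at the successor of `a` on the chain, which lies in `[a, b]` exactly when `a ≠ d`.
The two corrections sit on `a` and on a cover of `a`, where the theorem makes no claim.
-/

section Chain
variable {P : Type*} [PartialOrder P]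

lemma List.IsChain.isChain_le {l : List P} (hl : l.IsChain (· ⋖ ·)) :
    _root_.IsChain (· ≤ ·) {x | x ∈ l} := by
  have hlt : l.Pairwise (· < ·) := List.isChain_iff_pairwise.mp (hl.imp fun _ _ h => h.lt)
  have : Std.Symm fun x y : P => x ≤ y ∨ y ≤ x := ⟨fun _ _ => Or.symm⟩
  have hle : l.Pairwise fun x y : P => x ≤ y ∨ y ≤ x := hlt.imp fun h => Or.inl h.le
  exact fun x hx y hy hxy => hle.forall hx hy hxy

lemma List.IsChain.exists_covBy_le {l : List P} (hl : l.IsChain (· ⋖ ·)) {a e : P}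
    (ha : a ∈ l) (he : e ∈ l) (hae : a < e) : ∃ c ∈ l, a ⋖ c ∧ c ≤ e := by
  induction l with
  | nil => simp at ha
  | cons x t ih =>
    have hlt : (x :: t).Pairwise (· < ·) :=
      List.isChain_iff_pairwise.mp (hl.imp fun _ _ h => h.lt)
    have hx : ∀ y ∈ t, x < y := (List.pairwise_cons.mp hlt).1
    rcases List.mem_cons.mp ha with rfl | hat
    · rcases List.mem_cons.mp he with rfl | het
      · exact absurd hae (lt_irrefl _)
      · cases t with
        | nil => simp at het
        | cons y t =>
          have hty : ∀ z ∈ y :: t, y ≤ z := fun z hz => by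
            rcases List.mem_cons.mp hz with rfl | hz
            · exact le_rfl
            · exact ((List.pairwise_cons.mp (List.pairwise_cons.mp hlt).2).1 z hz).le
          exact ⟨y, by simp, (List.isChain_cons_cons.mp hl).1, hty e het⟩
    · rcases List.mem_cons.mp he with rfl | het
      · exact absurd (hx a hat) (lt_asymm hae)
      · obtain ⟨c, hc, hac, hce⟩ := ih hl.tail hat het
        exact ⟨c, List.mem_cons_of_mem x hc, hac, hce⟩

lemma IsChain.exists_isGreatest {s : Set P} (hs : IsChain (· ≤ ·) s) (hfin : s.Finite)
    (hne : s.Nonempty) : ∃ d, IsGreatest s d := by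
  obtain ⟨x, hx⟩ := hne
  obtain ⟨d, -, hd⟩ := hfin.exists_le_maximal hx
  refine ⟨d, hd.1, fun y hy => ?_⟩
  rcases eq_or_ne y d with rfl | hyd
  · exact le_rfl
  · exact (hs hy hd.1 hyd).elim id (hd.2 hy)

lemma exists_isGreatest_inter_Icc {C : Finset P} (hC : IsChain (· ≤ ·) (C : Set P)) {a b e : P}
    (he : e ∈ C) (hae : a ≤ e) (heb : e ≤ b) : ∃ d, IsGreatest (↑C ∩ Set.Icc a b) d :=
  (hC.mono Set.inter_subset_left).exists_isGreatest (C.finite_toSet.inter_of_left _)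
    ⟨e, he, hae, heb⟩

end Chain

lemma existsUnique_mem_of_pairwise_disjoint {P ι : Type*} [DecidableEq P] [Fintype ι]
    {S : ι → Finset P}
    (hdisj : ∀ k l, k ≠ l → Disjoint (S k) (S l)) {x : P} (hx : x ∈ univ.biUnion S) :
    ∃! k, x ∈ S k := by
  obtain ⟨k, -, hk⟩ := mem_biUnion.1 hx
  exact ⟨k, hk, fun l hl => by_contra fun hlk => disjoint_left.1 (hdisj l k hlk) hl hk⟩

section MuOn

variable {𝕜 P : Type*} [PartialOrder P] [LocallyFiniteOrder P] [DecidableEq P]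

variable (𝕜) in
noncomputable def muOn [AddCommGroup 𝕜] [One 𝕜] (F : Finset P) (a b : P) : 𝕜 :=
  if h : a ∈ F ∧ b ∈ F then mu 𝕜 (⟨a, h.1⟩ : {x // x ∈ F}) ⟨b, h.2⟩ else 0

section AddCommGroup
variable [AddCommGroup 𝕜] [One 𝕜] {F : Finset P} {a b t : P}

lemma muOn_of_notMem (h : ¬(a ∈ F ∧ b ∈ F)) : muOn 𝕜 F a b = 0 := dif_neg h

lemma muOn_self (ha : a ∈ F) : muOn 𝕜 F a a = 1 := by
  rw [muOn, dif_pos ⟨ha, ha⟩, mu_self]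

lemma muOn_of_not_le (h : ¬a ≤ b) : muOn 𝕜 F a b = 0 := by
  unfold muOn
  split_ifs
  · exact apply_eq_zero_of_not_le (mt Subtype.mk_le_mk.mp h) _
  · rfl

lemma sum_Icc_muOn_of_isGreatest (ha : a ∈ F) (ht : IsGreatest (↑F ∩ Set.Icc a b) t) :
    ∑ x ∈ Icc a b, muOn 𝕜 F a x = if a = t then 1 else 0 := by
  have htF : t ∈ F := ht.1.1
  have hfilter : {x ∈ Icc a b | x ∈ F} = {x ∈ Icc a t | x ∈ F} := by
    ext x
    simp only [mem_filter, mem_Icc]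
    exact ⟨fun hx => ⟨⟨hx.1.1, ht.2 ⟨hx.2, hx.1⟩⟩, hx.2⟩,
      fun hx => ⟨⟨hx.1.1, hx.1.2.trans ht.1.2.2⟩, hx.2⟩⟩
  calc ∑ x ∈ Icc a b, muOn 𝕜 F a x
      = ∑ x ∈ {x ∈ Icc a t | x ∈ F}, muOn 𝕜 F a x := by
        rw [← hfilter, sum_filter_of_ne fun x _ hx =>
          by_contra fun hxF => hx (muOn_of_notMem (by tauto))]
    _ = ∑ x ∈ Icc (⟨a, ha⟩ : {x // x ∈ F}) ⟨t, htF⟩, mu 𝕜 ⟨a, ha⟩ x := by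
        rw [subtype_Icc_eq, ← sum_subtype_eq_sum_filter]
        exact sum_congr rfl fun x _ => dif_pos ⟨ha, x.2⟩
    _ = if a = t then 1 else 0 := by
        simp only [sum_Icc_mu_right, Subtype.mk.injEq]

lemma sum_Icc_muOn (ha : a ∈ F) (hb : b ∈ F) (hab : a ≤ b) :
    ∑ x ∈ Icc a b, muOn 𝕜 F a x = if a = b then 1 else 0 :=
  sum_Icc_muOn_of_isGreatest ha ⟨⟨hb, hab, le_rfl⟩, fun _ hx => hx.2.2⟩

lemma mu_apply_of_covBy (h : a ⋖ b) : mu 𝕜 a b = -1 := by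
  have : Ico a b = {a} := coe_injective (by simpa using h.Ico_eq)
  rw [mu_eq_neg_sum_Ico_of_ne h.ne, this, sum_singleton, mu_self]

end AddCommGroup

lemma eq_mu_of_sum_Icc [Ring 𝕜] {a b : P} {g : P → 𝕜}
    (hg : ∀ b, a ≤ b → ∑ x ∈ Icc a b, g x = if a = b then 1 else 0) (hab : a ≤ b) :
    mu 𝕜 a b = g b := by
  classical
  -- `F` is `μ` with its row at `a` replaced by `g`; `F * ζ = 1` then forces `F = μ`.
  let F : IncidenceAlgebra 𝕜 P :=
    ⟨fun a' b' => if a' = a ∧ a ≤ b' then g b' else mu 𝕜 a' b', fun a' b' h => by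
      split_ifs with h'
      · exact absurd (h'.1 ▸ h'.2) h
      · exact apply_eq_zero_of_not_le h _⟩
  have hF : F * zeta 𝕜 = 1 := by
    ext a' b'
    rw [mul_apply, one_apply,
      sum_congr rfl fun x hx => by rw [zeta_of_le (mem_Icc.1 hx).2, mul_one]]
    by_cases ha' : a' = a
    · subst ha'
      by_cases hab' : a' ≤ b'
      · rw [← hg b' hab']
        exact sum_congr rfl fun x hx => by simp [F, (mem_Icc.1 hx).1]
      · rw [Icc_eq_empty hab', sum_empty, if_neg (fun h => hab' h.le)]
    · simpa [F, ha'] using sum_Icc_mu_right a' b'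
  simpa [F, hab] using congrArg (fun f : IncidenceAlgebra 𝕜 P => f a b)
    (left_inv_eq_right_inv hF zeta_mul_mu).symm

end MuOn

section Region

variable {P : Type*} [PartialOrder P] [LocallyFiniteOrder P] [DecidableEq P]

lemma exists_mem_lt_le_of_covBy_closed {A B : Finset P}
    (hAB : ∀ a b, a ⋖ b → a ∈ A → b ∈ A ∪ B) {x b : P} (hx : x ∈ A) (hxb : x ≤ b)
    (hb : b ∉ A) : ∃ e ∈ B, x < e ∧ e ≤ b := by
  obtain ⟨y, hxy, hy⟩ := (A ∩ Icc x b).exists_le_maximal (mem_inter.2 ⟨hx, mem_Icc.2 ⟨le_rfl, hxb⟩⟩)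
  obtain ⟨hyA, hyIcc⟩ := mem_inter.1 hy.1
  have hyb : y < b := (mem_Icc.1 hyIcc).2.lt_of_ne fun h => hb (h ▸ hyA)
  obtain ⟨z, hyz, hzb⟩ := exists_covBy_le_of_lt hyb
  rcases mem_union.1 (hAB y z hyz hyA) with hzA | hzB
  · have := hy.2 (mem_inter.2 ⟨hzA, mem_Icc.2 ⟨hxy.trans hyz.le, hzb⟩⟩) hyz.le
    exact absurd this hyz.lt.not_ge
  · exact ⟨z, hzB, hxy.trans_lt hyz.lt, hzb⟩

variable {n : ℕ} {C : Finset P} {S : Fin n → Finset P}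

lemma isGreatest_region_inter_Icc (hcross : ∀ a b, a ⋖ b → ∀ k, a ∈ S k → b ∈ S k ∪ C)
    {k : Fin n} {a b d : P} (hb : b ∉ S k ∪ C) (hd : IsGreatest (↑C ∩ Set.Icc a b) d) :
    IsGreatest (↑(S k ∪ C) ∩ Set.Icc a b) d := by
  refine ⟨⟨by simpa using Or.inr hd.1.1, hd.1.2⟩, fun x ⟨hxR, hax, hxb⟩ => ?_⟩
  rcases mem_union.1 hxR with hxS | hxC
  · obtain ⟨e, heC, hxe, heb⟩ := exists_mem_lt_le_of_covBy_closed (fun a b h => hcross a b h k)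
      hxS hxb fun h => hb (mem_union_left _ h)
    exact hxe.le.trans (hd.2 ⟨heC, hax.trans hxe.le, heb⟩)
  · exact hd.2 ⟨hxC, hax, hxb⟩

variable {𝕜 : Type*}

lemma mu_eq_muOn_region_of_notMem_chain [Ring 𝕜] (hC : IsChain (· ≤ ·) (C : Set P))
    (hcross : ∀ a b, a ⋖ b → ∀ k, a ∈ S k → b ∈ S k ∪ C)
    {k : Fin n} {a b : P} (haS : a ∈ S k) (haC : a ∉ C) (hab : a ≤ b) :
    mu 𝕜 a b = muOn 𝕜 (S k ∪ C) a b := by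
  refine eq_mu_of_sum_Icc (fun b hab => ?_) hab
  have ha : a ∈ S k ∪ C := mem_union_left _ haS
  by_cases hb : b ∈ S k ∪ C
  · exact sum_Icc_muOn ha hb hab
  · obtain ⟨e, heC, hae, heb⟩ := exists_mem_lt_le_of_covBy_closed (fun a b h => hcross a b h k)
      haS hab fun h => hb (mem_union_left _ h)
    obtain ⟨d, hd⟩ := exists_isGreatest_inter_Icc hC heC hae.le heb
    rw [sum_Icc_muOn_of_isGreatest ha (isGreatest_region_inter_Icc hcross hb hd),
      if_neg fun h : a = d => haC (h ▸ hd.1.1), if_neg fun h : a = b => hb (h ▸ ha)]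

lemma sum_sum_Icc_muOn_regions [AddCommGroupWithOne 𝕜]
    (hcross : ∀ a b, a ⋖ b → ∀ k, a ∈ S k → b ∈ S k ∪ C) (hS : ∀ x ∉ C, ∃! k, x ∈ S k)
    {a b d : P} (ha : a ∈ C) (hab : a < b) (hd : IsGreatest (↑C ∩ Set.Icc a b) d) :
    ∑ k, ∑ x ∈ Icc a b, muOn 𝕜 (S k ∪ C) a x = if a = d then (n : 𝕜) - 1 else 0 := by
  have hterm : ∀ k, ∑ x ∈ Icc a b, muOn 𝕜 (S k ∪ C) a x = if a = d ∧ b ∉ S k then 1 else 0 := by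
    intro k
    have ha' : a ∈ S k ∪ C := mem_union_right _ ha
    by_cases hb : b ∈ S k ∪ C
    · rw [sum_Icc_muOn ha' hb hab.le, if_neg hab.ne, if_neg]
      rintro ⟨rfl, hbS⟩
      exact hab.not_ge (hd.2 ⟨(mem_union.1 hb).resolve_left hbS, hab.le, le_rfl⟩)
    · rw [sum_Icc_muOn_of_isGreatest ha' (isGreatest_region_inter_Icc hcross hb hd)]
      have hbS : b ∉ S k := fun h => hb (mem_union_left _ h)
      simp only [hbS, not_false_eq_true, and_true]
  rw [sum_congr rfl fun k _ => hterm k]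
  split_ifs with had
  · subst had
    obtain ⟨l, hl, hluniq⟩ := hS b fun hbC => hab.not_ge (hd.2 ⟨hbC, hab.le, le_rfl⟩)
    have : ∀ k, (if a = a ∧ b ∉ S k then (1 : 𝕜) else 0) = 1 - if k = l then 1 else 0 := by
      intro k
      by_cases hkl : k = l
      · simp [hkl, hl]
      · have hbS : b ∉ S k := fun h => hkl (hluniq k h)
        simp [hkl, hbS]
    rw [sum_congr rfl fun k _ => this k, sum_sub_distrib, sum_ite_eq', if_pos (mem_univ l)]
    simp
  · simp [had]

lemma sum_Icc_covBy_mem_chain [AddCommGroup 𝕜] [One 𝕜] [DecidableRel (α := P) (· ⋖ ·)]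
    (hC : IsChain (· ≤ ·) (C : Set P))
    (hsucc : ∀ a ∈ C, ∀ e ∈ C, a < e → ∃ c ∈ C, a ⋖ c ∧ c ≤ e)
    {a b d : P} (ha : a ∈ C) (hd : IsGreatest (↑C ∩ Set.Icc a b) d) :
    ∑ x ∈ Icc a b, (if a ⋖ x ∧ x ∈ C then (1 : 𝕜) else 0) = if a = d then 0 else 1 := by
  split_ifs with had
  · subst had
    exact sum_eq_zero fun x hx =>
      if_neg fun ⟨hax, hxC⟩ => hax.lt.not_ge (hd.2 ⟨hxC, mem_Icc.1 hx⟩)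
  · obtain ⟨c, hcC, hac, hcd⟩ := hsucc a ha d hd.1.1 (hd.1.2.1.lt_of_ne had)
    have hcover : ∀ x, (a ⋖ x ∧ x ∈ C) ↔ x = c := by
      refine fun x => ⟨fun ⟨hax, hxC⟩ => ?_, by rintro rfl; exact ⟨hac, hcC⟩⟩
      rcases hC.total hxC hcC with hxc | hcx
      · exact (hac.eq_or_eq hax.lt.le hxc).resolve_left hax.lt.ne'
      · exact ((hax.eq_or_eq hac.lt.le hcx).resolve_left hac.lt.ne').symm
    simp_rw [hcover]
    rw [sum_ite_eq', if_pos (mem_Icc.2 ⟨hac.le, hcd.trans hd.1.2.2⟩)]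

lemma mu_eq_sum_muOn_regions_of_mem_chain [Ring 𝕜] [DecidableRel (α := P) (· ⋖ ·)]
    (hC : IsChain (· ≤ ·) (C : Set P))
    (hsucc : ∀ a ∈ C, ∀ e ∈ C, a < e → ∃ c ∈ C, a ⋖ c ∧ c ≤ e)
    (hcross : ∀ a b, a ⋖ b → ∀ k, a ∈ S k → b ∈ S k ∪ C) (hS : ∀ x ∉ C, ∃! k, x ∈ S k)
    {a b : P} (ha : a ∈ C) (hab : a ≤ b) :
    mu 𝕜 a b = ∑ k, muOn 𝕜 (S k ∪ C) a b +
      ((n : 𝕜) - 1) * ((if a ⋖ b ∧ b ∈ C then 1 else 0) - if a = b then 1 else 0) := by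
  refine eq_mu_of_sum_Icc (g := fun c => ∑ k, muOn 𝕜 (S k ∪ C) a c +
      ((n : 𝕜) - 1) * ((if a ⋖ c ∧ c ∈ C then 1 else 0) - if a = c then 1 else 0))
    (fun c hac => ?_) hab
  rw [sum_add_distrib, ← mul_sum, sum_sub_distrib, sum_ite_eq, if_pos (mem_Icc.2 ⟨le_rfl, hac⟩),
    sum_comm]
  obtain rfl | hac := hac.eq_or_lt
  · simp only [Icc_self, sum_singleton, muOn_self (mem_union_right _ ha), sum_const, card_univ,
      Fintype.card_fin, nsmul_eq_mul, mul_one, if_neg fun h : a ⋖ a ∧ a ∈ C => h.1.lt.false]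
    noncomm_ring
  · obtain ⟨d, hd⟩ := exists_isGreatest_inter_Icc hC ha le_rfl hac.le
    rw [sum_sum_Icc_muOn_regions hcross hS ha hac hd, sum_Icc_covBy_mem_chain hC hsucc ha hd,
      if_neg hac.ne]
    split_ifs <;> noncomm_ring

end Region

open IncidenceAlgebra in
theorem mobius_chain_general (P : Type) [Fintype P] [PartialOrder P] [DecidableEq P]
    [LocallyFiniteOrder P]
    (vs : List P) (hchain : List.Chain' (· ⋖ ·) vs)
    (n : ℕ) (S : Fin n → Finset P)
    (hdisj : ∀ k l, k ≠ l → Disjoint (S k) (S l))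
    (hcover : Finset.univ.biUnion S = Finset.univ \ vs.toFinset)
    (hcross : ∀ a b : P, a ⋖ b → ∀ k,
      (a ∈ S k → b ∈ S k ∪ vs.toFinset) ∧ (b ∈ S k → a ∈ S k ∪ vs.toFinset)) :
    ∀ i j : P, i ≠ j →
      (i ⋖ j → mu ℤ i j = -1) ∧
      (¬ i ⋖ j → mu ℤ i j =
        ∑ k : Fin n,
          if h : i ∈ S k ∪ vs.toFinset ∧ j ∈ S k ∪ vs.toFinset then
            mu ℤ (⟨i, h.1⟩ : {x : P // x ∈ S k ∪ vs.toFinset}) ⟨j, h.2⟩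
          else 0) := by
  classical
  intro i j hij
  refine ⟨mu_apply_of_covBy, fun hnc => ?_⟩
  set C := vs.toFinset
  change mu ℤ i j = ∑ k, muOn ℤ (S k ∪ C) i j
  have hC : IsChain (· ≤ ·) (C : Set P) := by rw [List.coe_toFinset]; exact hchain.isChain_le
  have hsucc : ∀ a ∈ C, ∀ e ∈ C, a < e → ∃ c ∈ C, a ⋖ c ∧ c ≤ e := by
    simpa [C] using fun a ha e he => hchain.exists_covBy_le ha he
  have hcross' : ∀ a b, a ⋖ b → ∀ k, a ∈ S k → b ∈ S k ∪ C := fun a b h k => (hcross a b h k).1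
  have hS : ∀ x ∉ C, ∃! k, x ∈ S k := fun x hx =>
    existsUnique_mem_of_pairwise_disjoint hdisj (hcover ▸ mem_sdiff.2 ⟨mem_univ x, hx⟩)
  by_cases hle : i ≤ j
  swap
  · simp [apply_eq_zero_of_not_le hle, muOn_of_not_le hle]
  by_cases hiC : i ∈ C
  · simp [mu_eq_sum_muOn_regions_of_mem_chain hC hsucc hcross' hS hiC hle, hnc, hij]
  · obtain ⟨l, hl, hluniq⟩ := hS i hiC
    rw [mu_eq_muOn_region_of_notMem_chain hC hcross' hl hiC hle, sum_eq_single l]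
    · exact fun k _ hkl => muOn_of_notMem fun h =>
        (mem_union.1 h.1).elim (fun hk => hkl (hluniq k hk)) hiC
    · simp

open IncidenceAlgebra in
/-- Möbius function and disconnecting chains.  Let `vs` be a chain of
the Hasse diagram of the finite poset `P` whose removal disconnects the Hasse diagram
into the components `S 0, …, S (n-1)`, and let the regions be `S k ∪ V_c`.  For
distinct `i, j`: if `j` covers `i` then `μ_P(i,j) = -1`; otherwise `μ_P(i,j)` is the
sum over the regions `P_k` of `μ_{P_k}(i,j)` (where `μ_{P_k}(i,j) = 0` if `i ∉ P_k`
or `j ∉ P_k`). -/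
theorem mobius_chain (P : Type) [Fintype P] [PartialOrder P] [DecidableEq P]
    [LocallyFiniteOrder P]
    (vs : List P) (hne : vs ≠ []) (hchain : List.Chain' (· ⋖ ·) vs)
    (n : ℕ) (S : Fin n → Finset P)
    (hdisj : ∀ k l, k ≠ l → Disjoint (S k) (S l))
    (hcover : Finset.univ.biUnion S = Finset.univ \ vs.toFinset)
    (hSne : ∀ k, (S k).Nonempty)
    (hSconn : ∀ k,
      (SimpleGraph.induce (↑(S k) : Set P)
        (SimpleGraph.fromRel fun a b : P => a ⋖ b)).Connected)
    (hcross : ∀ a b : P, a ⋖ b → ∀ k,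
      (a ∈ S k → b ∈ S k ∪ vs.toFinset) ∧ (b ∈ S k → a ∈ S k ∪ vs.toFinset)) :
    ∀ i j : P, i ≠ j →
      (i ⋖ j → mu ℤ i j = -1) ∧
      (¬ i ⋖ j → mu ℤ i j =
        ∑ k : Fin n,
          if h : i ∈ S k ∪ vs.toFinset ∧ j ∈ S k ∪ vs.toFinset then
            mu ℤ (⟨i, h.1⟩ : {x : P // x ∈ S k ∪ vs.toFinset}) ⟨j, h.2⟩
          else 0) :=
  mobius_chain_general P vs hchain n S hdisj hcover hcross
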